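/- arXiv:2302.01658 — 2 statements merged into one kernel-verified Lean document; each statement's English description precedes it below -/
import Mathlib

section
/- Let δ ∈ (0,1), 0 < η < 1, a > 0, K ≥ 1 and h > 0, and set ε = min{δ/2, η}. Then the set { n ∈ ℕ : max{ f_a(1, h n), f_a(K, h n) } ≤ ε } is nonempty, and its least element M satisfies M ≤ 1 + (2/h) · ( ln(4/√π) + |ln ε| + (1/4) ln a + (1/2) max{ 0, ln K − ln a } ). -/
/-- The Dawson function `F(x) = e^{−x²} ∫₀ˣ e^{t²} dt`. -/
noncomputable def dawson (x : ℝ) : ℝ := Real.exp (-x ^ 2) * ∫ t in (0 : ℝ)..x, Real.exp (t ^ 2)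

/-- The error function `erf(x) = (2/√π) ∫₀ˣ e^{−t²} dt`. -/
noncomputable def erf (x : ℝ) : ℝ := 2 / Real.sqrt Real.pi * ∫ t in (0 : ℝ)..x, Real.exp (-t ^ 2)

/-- `f_a(s, y) = (2 a^{1/4}/√(sπ)) e^{−(s/√a) e^{−y}} F(e^{−y/2}) + erf((√s/a^{1/4}) e^{−y/2})`. -/
noncomputable def fA (a s y : ℝ) : ℝ :=
  2 * a ^ ((1 : ℝ) / 4) / Real.sqrt (s * Real.pi) *
      Real.exp (-(s / Real.sqrt a) * Real.exp (-y)) * dawson (Real.exp (-y / 2))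
    + erf (Real.sqrt s / a ^ ((1 : ℝ) / 4) * Real.exp (-y / 2))


lemma dawson_nonneg {x : ℝ} (hx : 0 ≤ x) : 0 ≤ dawson x :=
  mul_nonneg (Real.exp_pos _).le
    (intervalIntegral.integral_nonneg hx fun t _ => (Real.exp_pos _).le)

lemma dawson_le {x : ℝ} (hx : 0 ≤ x) : dawson x ≤ x := by
  have h1 : (∫ t in (0:ℝ)..x, Real.exp (t ^ 2)) ≤ ∫ _t in (0:ℝ)..x, Real.exp (x ^ 2) := by
    apply intervalIntegral.integral_mono_on hx
    · exact (Real.continuous_exp.comp (continuous_pow 2)).intervalIntegrable 0 x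
    · exact intervalIntegrable_const
    · intro t ht
      exact Real.exp_le_exp.2 (by nlinarith [ht.1, ht.2])
  have h2 : (∫ _t in (0:ℝ)..x, Real.exp (x ^ 2)) = x * Real.exp (x ^ 2) := by
    simp
  calc dawson x ≤ Real.exp (-x ^ 2) * (x * Real.exp (x ^ 2)) := by
        unfold dawson
        apply mul_le_mul_of_nonneg_left _ (Real.exp_pos _).le
        rw [← h2]; exact h1
    _ = x := by
        rw [mul_comm x, ← mul_assoc, ← Real.exp_add]
        simp

lemma erf_nonneg {x : ℝ} (hx : 0 ≤ x) : 0 ≤ erf x :=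
  mul_nonneg (by positivity)
    (intervalIntegral.integral_nonneg hx fun t _ => (Real.exp_pos _).le)

lemma erf_le {x : ℝ} (hx : 0 ≤ x) : erf x ≤ 2 / Real.sqrt Real.pi * x := by
  unfold erf
  apply mul_le_mul_of_nonneg_left _ (by positivity)
  have h1 : (∫ t in (0:ℝ)..x, Real.exp (-t ^ 2)) ≤ ∫ _t in (0:ℝ)..x, (1:ℝ) := by
    apply intervalIntegral.integral_mono_on hx
    · exact (Real.continuous_exp.comp ((continuous_pow 2).neg)).intervalIntegrable 0 x
    · exact intervalIntegrable_const
    · intro t ht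
      exact Real.exp_le_one_iff.2 (by nlinarith [ht.1])
  simpa using h1

lemma fA_le (a s y : ℝ) (ha : 0 < a) (hs : 1 ≤ s) :
    fA a s y ≤ 2 / Real.sqrt Real.pi * Real.exp (-y / 2) *
      (a ^ ((1:ℝ)/4) + Real.sqrt s / a ^ ((1:ℝ)/4)) := by
  have hs0 : 0 < s := lt_of_lt_of_le one_pos hs
  have hπ : (0:ℝ) < Real.pi := Real.pi_pos
  have ha4 : (0:ℝ) < a ^ ((1:ℝ)/4) := Real.rpow_pos_of_pos ha _
  have he : (0:ℝ) < Real.exp (-y / 2) := Real.exp_pos _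
  have hterm1 : 2 * a ^ ((1 : ℝ) / 4) / Real.sqrt (s * Real.pi) *
      Real.exp (-(s / Real.sqrt a) * Real.exp (-y)) * dawson (Real.exp (-y / 2)) ≤
      2 / Real.sqrt Real.pi * Real.exp (-y / 2) * a ^ ((1:ℝ)/4) := by
    have hE : Real.exp (-(s / Real.sqrt a) * Real.exp (-y)) ≤ 1 := by
      apply Real.exp_le_one_iff.2
      have : 0 ≤ s / Real.sqrt a := div_nonneg hs0.le (Real.sqrt_nonneg a)
      nlinarith [Real.exp_pos (-y)]
    have hC : 2 * a ^ ((1 : ℝ) / 4) / Real.sqrt (s * Real.pi) ≤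
        2 * a ^ ((1 : ℝ) / 4) / Real.sqrt Real.pi := by
      apply div_le_div_of_nonneg_left (by positivity) (Real.sqrt_pos.2 hπ)
      exact Real.sqrt_le_sqrt (by nlinarith)
    have hD : dawson (Real.exp (-y / 2)) ≤ Real.exp (-y / 2) := dawson_le he.le
    have hD0 : 0 ≤ dawson (Real.exp (-y / 2)) := dawson_nonneg he.le
    calc 2 * a ^ ((1 : ℝ) / 4) / Real.sqrt (s * Real.pi) *
          Real.exp (-(s / Real.sqrt a) * Real.exp (-y)) * dawson (Real.exp (-y / 2))
        ≤ 2 * a ^ ((1 : ℝ) / 4) / Real.sqrt Real.pi * 1 * Real.exp (-y / 2) := by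
          apply mul_le_mul _ hD hD0 (by positivity)
          exact mul_le_mul hC hE (Real.exp_pos _).le (by positivity)
      _ = 2 / Real.sqrt Real.pi * Real.exp (-y / 2) * a ^ ((1:ℝ)/4) := by ring
  have hterm2 : erf (Real.sqrt s / a ^ ((1 : ℝ) / 4) * Real.exp (-y / 2)) ≤
      2 / Real.sqrt Real.pi * Real.exp (-y / 2) * (Real.sqrt s / a ^ ((1:ℝ)/4)) := by
    have hx0 : 0 ≤ Real.sqrt s / a ^ ((1 : ℝ) / 4) * Real.exp (-y / 2) := by positivity
    calc erf (Real.sqrt s / a ^ ((1 : ℝ) / 4) * Real.exp (-y / 2))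
        ≤ 2 / Real.sqrt Real.pi * (Real.sqrt s / a ^ ((1 : ℝ) / 4) * Real.exp (-y / 2)) :=
          erf_le hx0
      _ = 2 / Real.sqrt Real.pi * Real.exp (-y / 2) * (Real.sqrt s / a ^ ((1:ℝ)/4)) := by ring
  unfold fA
  calc _ ≤ 2 / Real.sqrt Real.pi * Real.exp (-y / 2) * a ^ ((1:ℝ)/4) +
        2 / Real.sqrt Real.pi * Real.exp (-y / 2) * (Real.sqrt s / a ^ ((1:ℝ)/4)) :=
        add_le_add hterm1 hterm2
    _ = _ := by ring

/-- the set `{n ∈ ℕ : max{f_a(1, hn), f_a(K, hn)} ≤ min{δ/2, η}}` is nonempty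
and its least element `M` satisfies
`M ≤ 1 + (2/h)(ln(4/√π) + |ln ε| + (1/4) ln a + (1/2) max{0, ln K − ln a})`. -/
theorem truncation_parameter_bound (δ η a K h : ℝ)
    (hδ0 : 0 < δ) (hδ1 : δ < 1) (hη0 : 0 < η) (hη1 : η < 1)
    (ha : 0 < a) (hK : 1 ≤ K) (hh : 0 < h) :
    ∃ M : ℕ,
      IsLeast {n : ℕ | max (fA a 1 (h * n)) (fA a K (h * n)) ≤ min (δ / 2) η} M ∧
        (M : ℝ) ≤ 1 + 2 / h *
          (Real.log (4 / Real.sqrt Real.pi) + |Real.log (min (δ / 2) η)|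
            + 1 / 4 * Real.log a + 1 / 2 * max 0 (Real.log K - Real.log a)) := by
  set ε := min (δ / 2) η with hε
  have hε0 : 0 < ε := lt_min (by linarith) hη0
  have hε1 : ε < 1 := lt_of_le_of_lt (min_le_right _ _) hη1
  set L := max ((1:ℝ)/4 * Real.log a) ((1:ℝ)/2 * Real.log K - 1/4 * Real.log a) with hLdef
  have hlogK : 0 ≤ Real.log K := Real.log_nonneg hK
  have hL0 : 0 ≤ L := by
    have h1 := le_max_left ((1:ℝ)/4 * Real.log a) ((1:ℝ)/2 * Real.log K - 1/4 * Real.log a)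
    have h2 := le_max_right ((1:ℝ)/4 * Real.log a) ((1:ℝ)/2 * Real.log K - 1/4 * Real.log a)
    linarith
  have hsπ : (0:ℝ) < Real.sqrt Real.pi := Real.sqrt_pos.2 Real.pi_pos
  have hsπ2 : Real.sqrt Real.pi ≤ 2 := by
    rw [show (2:ℝ) = Real.sqrt 4 by
      rw [show (4:ℝ) = 2 ^ 2 by norm_num, Real.sqrt_sq (by norm_num)]]
    exact Real.sqrt_le_sqrt (by linarith [Real.pi_le_four])
  have hc1 : (1:ℝ) ≤ 4 / Real.sqrt Real.pi := by
    rw [le_div_iff₀ hsπ]; linarith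
  have hlogc : 0 ≤ Real.log (4 / Real.sqrt Real.pi) := Real.log_nonneg hc1
  set Y := 2 * (Real.log (4 / Real.sqrt Real.pi) + |Real.log ε| + L) with hYdef
  have hY0 : 0 ≤ Y := by positivity
  set n₀ := ⌈Y / h⌉₊ with hn₀
  -- key bound: for y ≥ Y, the fA bound is ≤ ε
  have key : ∀ s : ℝ, 1 ≤ s → s ≤ K → fA a s (h * n₀) ≤ ε := by
    intro s hs1 hsK
    have hy : Y ≤ h * n₀ := by
      have := Nat.le_ceil (Y / h)
      calc Y = h * (Y / h) := by field_simp
        _ ≤ h * n₀ := by exact mul_le_mul_of_nonneg_left this hh.le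
    have ha4 : a ^ ((1:ℝ)/4) = Real.exp (1/4 * Real.log a) := by
      rw [Real.rpow_def_of_pos ha]; ring_nf
    have hKs : Real.sqrt s / a ^ ((1:ℝ)/4) ≤ Real.exp L := by
      have h1 : Real.sqrt s ≤ Real.exp (1/2 * Real.log K) := by
        rw [Real.sqrt_eq_rpow, Real.rpow_def_of_pos (by linarith)]
        rw [Real.exp_le_exp]
        have : Real.log s ≤ Real.log K := Real.log_le_log (by linarith) hsK
        linarith
      rw [ha4, div_le_iff₀ (Real.exp_pos _), ← Real.exp_add]
      calc Real.sqrt s ≤ Real.exp (1/2 * Real.log K) := h1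
        _ ≤ Real.exp (L + 1/4 * Real.log a) := by
            rw [Real.exp_le_exp]
            have := le_max_right ((1:ℝ)/4 * Real.log a) ((1:ℝ)/2 * Real.log K - 1/4 * Real.log a)
            linarith
    have ha4L : a ^ ((1:ℝ)/4) ≤ Real.exp L := by
      rw [ha4, Real.exp_le_exp]
      exact le_max_left _ _
    have hsum : a ^ ((1:ℝ)/4) + Real.sqrt s / a ^ ((1:ℝ)/4) ≤ 2 * Real.exp L := by
      linarith
    calc fA a s (h * n₀) ≤ 2 / Real.sqrt Real.pi * Real.exp (-(h * n₀) / 2) *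
          (a ^ ((1:ℝ)/4) + Real.sqrt s / a ^ ((1:ℝ)/4)) := fA_le a s _ ha hs1
      _ ≤ 2 / Real.sqrt Real.pi * Real.exp (-(h * n₀) / 2) * (2 * Real.exp L) := by
          apply mul_le_mul_of_nonneg_left hsum (by positivity)
      _ = 4 / Real.sqrt Real.pi * Real.exp L * Real.exp (-(h * n₀) / 2) := by ring
      _ ≤ 4 / Real.sqrt Real.pi * Real.exp L *
          Real.exp (-(Real.log (4 / Real.sqrt Real.pi) + |Real.log ε| + L)) := by
          apply mul_le_mul_of_nonneg_left _ (by positivity)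
          rw [Real.exp_le_exp]; linarith
      _ = ε := by
          have habs : |Real.log ε| = -Real.log ε := abs_of_neg (Real.log_neg hε0 hε1)
          rw [habs, mul_assoc, ← Real.exp_add]
          have : L + -(Real.log (4 / Real.sqrt Real.pi) + -Real.log ε + L)
              = Real.log ε - Real.log (4 / Real.sqrt Real.pi) := by ring
          rw [this, Real.exp_sub, Real.exp_log hε0, Real.exp_log (by positivity)]
          field_simp
  set S : Set ℕ := {n : ℕ | max (fA a 1 (h * n)) (fA a K (h * n)) ≤ ε} with hS
  have hmem : n₀ ∈ S := max_le (key 1 le_rfl hK) (key K hK le_rfl)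
  refine ⟨sInf S, ⟨Nat.sInf_mem ⟨n₀, hmem⟩, fun n hn => Nat.sInf_le hn⟩, ?_⟩
  have hM : ((sInf S : ℕ) : ℝ) ≤ (n₀ : ℝ) := by exact_mod_cast Nat.sInf_le hmem
  have hn₀le : (n₀ : ℝ) ≤ Y / h + 1 := (Nat.ceil_lt_add_one (by positivity)).le
  have hLeq : L = 1/4 * Real.log a + 1/2 * max 0 (Real.log K - Real.log a) := by
    rcases le_total (Real.log K - Real.log a) 0 with hcase | hcase
    · rw [hLdef, max_eq_left (by linarith), max_eq_left hcase]; ring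
    · rw [hLdef, max_eq_right (by linarith), max_eq_right hcase]; ring
  have : Y / h + 1 = 1 + 2 / h *
      (Real.log (4 / Real.sqrt Real.pi) + |Real.log ε|
        + 1 / 4 * Real.log a + 1 / 2 * max 0 (Real.log K - Real.log a)) := by
    rw [hYdef, hLeq]; field_simp; ring
  linarith
end

section
/- For every real y with 0 ≤ y ≤ 3/4, one has 2 y F(y) ≤ 1; equivalently, since F′(y) = 1 − 2 y F(y), the Dawson function F is nondecreasing on the interval [0, 3/4]. -/
/-!
Since `F' = 1 - 2 y F`, both claims reduce to `2 y F(y) ≤ 1` on `[0, 3/4]`. The pointwise bound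
`e^s ≤ 1 + s e^s` with `s = t²`, together with `e^{t²} ≤ e^{y²}` for `t ≤ y`, gives
`∫₀ʸ e^{t²} dt ≤ y + (y³/3) e^{y²}`, hence `2 y F(y) ≤ 2 y² e^{-y²} + 2 y⁴/3 ≤ 2u/(1+u) + 2u²/3`
with `u = y² ≤ 9/16`, and the last expression is at most `1` there.
-/

open Real intervalIntegral

theorem exp_neg_mul_exp_self (s : ℝ) : exp (-s) * exp s = 1 := by
  rw [← exp_add, neg_add_cancel, exp_zero]

theorem hasDerivAt_dawson (x : ℝ) : HasDerivAt dawson (1 - 2 * x * dawson x) x := by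
  have hG : HasDerivAt (fun u : ℝ => ∫ t in (0 : ℝ)..u, exp (t ^ 2)) (exp (x ^ 2)) x :=
    ((continuous_exp.comp (continuous_pow 2)).integral_hasStrictDerivAt 0 x).hasDerivAt
  have hE : HasDerivAt (fun u : ℝ => exp (-u ^ 2)) (exp (-x ^ 2) * -(2 * x)) x := by
    simpa using (hasDerivAt_pow 2 x).neg.exp
  refine (hE.mul hG).congr_deriv ?_
  unfold dawson
  linear_combination exp_neg_mul_exp_self (x ^ 2)

theorem exp_le_one_add_mul_exp (s : ℝ) : exp s ≤ 1 + s * exp s := by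
  have h := mul_le_mul_of_nonneg_right (one_sub_le_exp_neg s) (exp_pos s).le
  linarith [exp_neg_mul_exp_self s]

theorem exp_neg_mul_one_add_le_one (s : ℝ) : exp (-s) * (1 + s) ≤ 1 := by
  calc exp (-s) * (1 + s) ≤ exp (-s) * exp s := by
        gcongr; linarith [add_one_le_exp s]
    _ = 1 := exp_neg_mul_exp_self s

theorem integral_exp_sq_le {y : ℝ} (hy : 0 ≤ y) :
    ∫ t in (0 : ℝ)..y, exp (t ^ 2) ≤ y + y ^ 3 / 3 * exp (y ^ 2) := by
  have hpoint : ∀ t ∈ Set.Icc 0 y, exp (t ^ 2) ≤ 1 + t ^ 2 * exp (y ^ 2) := fun t ⟨ht0, hty⟩ => by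
    have : exp (t ^ 2) ≤ exp (y ^ 2) := exp_le_exp.2 (pow_le_pow_left₀ ht0 hty 2)
    nlinarith [exp_le_one_add_mul_exp (t ^ 2), sq_nonneg t]
  calc ∫ t in (0 : ℝ)..y, exp (t ^ 2)
      ≤ ∫ t in (0 : ℝ)..y, (1 + t ^ 2 * exp (y ^ 2)) :=
        integral_mono_on hy (by apply Continuous.intervalIntegrable; fun_prop)
          (by apply Continuous.intervalIntegrable; fun_prop) hpoint
    _ = y + y ^ 3 / 3 * exp (y ^ 2) := by
        rw [integral_add intervalIntegrable_const
          ((intervalIntegrable_pow 2).mul_const _), integral_const, smul_eq_mul, integral_mul_const,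
          integral_pow]
        ring

theorem two_mul_mul_dawson_le_one {y : ℝ} (h0 : 0 ≤ y) (h1 : y ≤ 3 / 4) :
    2 * y * dawson y ≤ 1 := by
  have hu : y ^ 2 ≤ 9 / 16 := by nlinarith
  have hpoly : 2 * y ^ 2 ≤ (1 - 2 * y ^ 4 / 3) * (1 + y ^ 2) := by
    nlinarith [sq_nonneg y, mul_nonneg (sq_nonneg y) (sq_nonneg y)]
  have hE : 2 * y ^ 2 * exp (-y ^ 2) * (1 + y ^ 2) ≤ 2 * y ^ 2 := by
    simpa [mul_assoc] using
      mul_le_mul_of_nonneg_left (exp_neg_mul_one_add_le_one (y ^ 2)) (by positivity : 0 ≤ 2 * y ^ 2)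
  calc 2 * y * dawson y ≤ 2 * y * exp (-y ^ 2) * (y + y ^ 3 / 3 * exp (y ^ 2)) := by
        rw [dawson, ← mul_assoc]; gcongr; exact integral_exp_sq_le h0
    _ = 2 * y ^ 2 * exp (-y ^ 2) + 2 * y ^ 4 / 3 := by
        linear_combination (2 * y ^ 4 / 3) * exp_neg_mul_exp_self (y ^ 2)
    _ ≤ 1 := by
        have : 2 * y ^ 2 * exp (-y ^ 2) ≤ 1 - 2 * y ^ 4 / 3 :=
          le_of_mul_le_mul_right (hE.trans hpoly) (by positivity)
        linarith

/-- for `0 ≤ y ≤ 3/4` one has `2 y F(y) ≤ 1`; equivalently, the Dawson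
function is nondecreasing on `[0, 3/4]`. -/
theorem dawson_monotone_on_initial_interval :
    (∀ y : ℝ, 0 ≤ y → y ≤ 3 / 4 → 2 * y * dawson y ≤ 1) ∧
      MonotoneOn dawson (Set.Icc (0 : ℝ) (3 / 4)) := by
  have hbound : ∀ y : ℝ, 0 ≤ y → y ≤ 3 / 4 → 2 * y * dawson y ≤ 1 :=
    fun _ => two_mul_mul_dawson_le_one
  have hcont : Continuous dawson :=
    continuous_iff_continuousAt.2 fun x => (hasDerivAt_dawson x).continuousAt
  refine ⟨hbound, monotoneOn_of_hasDerivWithinAt_nonneg (convex_Icc 0 (3 / 4))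
    hcont.continuousOn (fun x _ => (hasDerivAt_dawson x).hasDerivWithinAt) fun x hx => ?_⟩
  rw [interior_Icc] at hx
  linarith [hbound x hx.1.le hx.2.le]
end
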